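/- arXiv:0810.4419 — 3 statements merged into one kernel-verified Lean document; each statement's English description precedes it below -/
import Mathlib

section
/- In a link graph satisfying the binding rule, if the parent map of the accompanying place graph is acyclic and the scope rule holds, then no two distinct binding ports are peers; consequently every edge is linked to at most one binding port, and the set of edges E decomposes as a disjoint union E = E_F ⊎ E_B where E_B is in bijection with the set P_B of binding ports via the link map. -/
/-!
If two distinct binding ports `p`, `q` were peers, the scope rule applied to each of them as a
binder would place the node of `q` strictly below the node of `p` and vice versa, so by
transitivity the node of `p` would lie strictly below itself, contradicting acyclicity. Hence the
link map is injective on binding ports; by the binding rule it lands in the edges, so it is a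
bijection from `P_B` onto the bound edges, and `E` splits into the bound edges and their
complement.
-/

namespace Bigraphs

abbrev Pl (n m : ℕ) (V : Type*) := Sum (Fin n) (Sum V (Fin m))

def inDom {n m : ℕ} {V : Type*} : Sum (Fin n) V → Pl n m V
  | .inl i => .inl i
  | .inr v => .inr (.inl v)

def inCod {n m : ℕ} {V : Type*} : Sum V (Fin m) → Pl n m V
  | .inl v => .inr (.inl v)
  | .inr j => .inr (.inr j)

def step {n m : ℕ} {V : Type*} (prnt : Sum (Fin n) V → Sum V (Fin m))
    (x y : Pl n m V) : Prop :=
  ∃ a, inDom a = x ∧ inCod (prnt a) = y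

def plt {n m : ℕ} {V : Type*} (prnt : Sum (Fin n) V → Sum V (Fin m)) :
    Pl n m V → Pl n m V → Prop :=
  Relation.TransGen (step prnt)

def Acyclic {n m : ℕ} {V : Type*} (prnt : Sum (Fin n) V → Sum V (Fin m)) : Prop :=
  ∀ v : V, ¬ plt prnt (.inr (.inl v)) (.inr (.inl v))

/-- A binding bigraph `G : (n, X, locX) → (m, Y, locY)`. `PB` are the binding
ports, `PF` the free ports, located at their nodes; `X`/`Y` the inner/outer
names with their locality maps; `E` the edges. -/
structure Bigraph (n m : ℕ) (X Y : Type*) where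
  V : Type
  E : Type
  PB : Type
  PF : Type
  nodeB : PB → V
  nodeF : PF → V
  locX : X → Option (Fin n)
  locY : Y → Option (Fin m)
  prnt : Sum (Fin n) V → Sum V (Fin m)
  link : Sum (Sum PB PF) X → Sum E Y

variable {n m : ℕ} {X Y : Type*}

/-- Points of a bigraph: ports and inner names. -/
abbrev Bigraph.Point (G : Bigraph n m X Y) := Sum (Sum G.PB G.PF) X

/-- The location of a point (`none` for global inner names). -/
def Bigraph.pointLoc (G : Bigraph n m X Y) : G.Point → Option (Sum (Fin n) G.V)
  | .inl (.inl p) => some (.inr (G.nodeB p))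
  | .inl (.inr p) => some (.inr (G.nodeF p))
  | .inr x => (G.locX x).map .inl

/-- The binding rule: no binding port is linked to an outer name. -/
def Bigraph.BindingRule (G : Bigraph n m X Y) : Prop :=
  ∀ p : G.PB, ∃ e : G.E, G.link (.inl (.inl p)) = .inl e

/-- The scope rule: every peer of a binder located at `w` is located at some
`w' ≺ w`.  Binders are the binding ports (located at their node) and the local
outer names (located at their root). -/
def Bigraph.ScopeRule (G : Bigraph n m X Y) : Prop :=
  (∀ p : G.PB, ∀ q : G.Point, q ≠ .inl (.inl p) →
    G.link q = G.link (.inl (.inl p)) →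
    ∃ w', G.pointLoc q = some w' ∧
      plt G.prnt (inDom w') (inCod (.inl (G.nodeB p)))) ∧
  (∀ y : Y, ∀ j : Fin m, G.locY y = some j → ∀ q : G.Point, G.link q = .inr y →
    ∃ w', G.pointLoc q = some w' ∧
      plt G.prnt (inDom w') (inCod (.inr j)))

/-- An edge is bound when some binding port is linked to it. -/
def Bigraph.Bound (G : Bigraph n m X Y) (e : G.E) : Prop :=
  ∃ p : G.PB, G.link (.inl (.inl p)) = .inl e

namespace Bigraph

variable (G : Bigraph n m X Y)

theorem plt_nodeB_of_peers (hscope : G.ScopeRule) {p q : G.PB} (hpq : p ≠ q)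
    (hlink : G.link (.inl (.inl q)) = G.link (.inl (.inl p))) :
    plt G.prnt (.inr (.inl (G.nodeB q))) (.inr (.inl (G.nodeB p))) := by
  obtain ⟨w, hw, hlt⟩ := hscope.1 p (.inl (.inl q)) (by simpa using hpq.symm) hlink
  cases hw
  exact hlt

theorem link_bindingPort_injective (hac : Acyclic G.prnt) (hscope : G.ScopeRule) :
    Function.Injective (fun p : G.PB => G.link (.inl (.inl p))) := by
  intro p q hlink
  by_contra hpq
  exact hac (G.nodeB p) <|
    (G.plt_nodeB_of_peers hscope (Ne.symm hpq) hlink).trans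
      (G.plt_nodeB_of_peers hscope hpq hlink.symm)

variable {G}

noncomputable def bindingEdge (hbind : G.BindingRule) (p : G.PB) : G.E :=
  (hbind p).choose

theorem link_bindingPort (hbind : G.BindingRule) (p : G.PB) :
    G.link (.inl (.inl p)) = .inl (bindingEdge hbind p) :=
  (hbind p).choose_spec

theorem bindingEdge_injective (hac : Acyclic G.prnt) (hbind : G.BindingRule)
    (hscope : G.ScopeRule) : Function.Injective (bindingEdge hbind) := fun p q h =>
  G.link_bindingPort_injective hac hscope <| by
    simp only [link_bindingPort hbind, h]

theorem bound_iff_mem_range_bindingEdge (hbind : G.BindingRule) (e : G.E) :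
    G.Bound e ↔ e ∈ Set.range (bindingEdge hbind) := by
  simp only [Bound, link_bindingPort hbind, Sum.inl.injEq, Set.mem_range]

noncomputable def bindingPortEquivBound (hac : Acyclic G.prnt) (hbind : G.BindingRule)
    (hscope : G.ScopeRule) : G.PB ≃ {e : G.E // G.Bound e} :=
  (Equiv.ofInjective _ (bindingEdge_injective hac hbind hscope)).trans
    (Equiv.subtypeEquivRight fun e => (bound_iff_mem_range_bindingEdge hbind e).symm)

end Bigraph

/-- No two distinct binding ports are peers; every edge is linked to at most
one binding port; and the edges decompose as free edges plus bound edges, the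
latter in bijection with the binding ports via the link map. -/
theorem binding_ports_not_peers (G : Bigraph n m X Y)
    (hac : Acyclic G.prnt) (hbind : G.BindingRule) (hscope : G.ScopeRule) :
    Function.Injective (fun p : G.PB => G.link (.inl (.inl p))) ∧
    Nonempty (G.PB ≃ {e : G.E // G.Bound e}) ∧
    Nonempty (G.E ≃ Sum {e : G.E // ¬ G.Bound e} {e : G.E // G.Bound e}) := by
  classical
  exact ⟨G.link_bindingPort_injective hac hscope,
    ⟨Bigraph.bindingPortEquivBound hac hbind hscope⟩,
    ⟨(Equiv.sumCompl G.Bound).symm.trans (Equiv.sumComm _ _)⟩⟩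

end Bigraphs
end

section
/- The composition of two binding bigraphs G : U₁ → U₂ and G' : U₂ → U₃ (formed by taking coproducts of nodes, edges, and control maps, and composing parent and link maps through the middle interface) again has an acyclic parent map. -/
/-!
A parent chain of the composite that starts at a node of the inner graph follows the inner
parent map until it passes through the middle interface; from then on it runs among the outer
nodes and roots, following the outer parent map, and never returns. Hence a cycle of the
composite projects to a cycle of one of the two parent maps.
-/

namespace Bigraphs

variable {n m k : ℕ} {V V' : Type*}

/-- Reinterpret a value of the second parent map in the composite. -/
def through (x : Sum V' (Fin k)) : Sum (Sum V V') (Fin k) :=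
  match x with
  | .inl v' => .inl (.inr v')
  | .inr r => .inr r

/-- The parent map of the composite place graph: apply `prnt`, and whenever the
result lies in the middle interface `m`, continue with `prnt'`. -/
def compPrnt (prnt : Sum (Fin n) V → Sum V (Fin m))
    (prnt' : Sum (Fin m) V' → Sum V' (Fin k)) :
    Sum (Fin n) (Sum V V') → Sum (Sum V V') (Fin k)
  | .inl i =>
      match prnt (.inl i) with
      | .inl v => .inl (.inl v)
      | .inr j => through (prnt' (.inl j))
  | .inr (.inl v) =>
      match prnt (.inr v) with
      | .inl w => .inl (.inl w)
      | .inr j => through (prnt' (.inl j))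
  | .inr (.inr v') => through (prnt' (.inr v'))

theorem _root_.Relation.TransGen.exists_map_or_mem {α β : Type*} {r : α → α → Prop}
    {p : β → β → Prop} {f : α → Option β} {S : Set α}
    (hS : ∀ a b, r a b → a ∈ S → b ∈ S)
    (hf : ∀ a b a', r a b → f a = some a' → (∃ b', f b = some b' ∧ p a' b') ∨ b ∈ S)
    {a b : α} {a' : β} (hab : Relation.TransGen r a b) (ha : f a = some a') :
    (∃ b', f b = some b' ∧ Relation.TransGen p a' b') ∨ b ∈ S := by
  induction hab with
  | single hab => exact (hf _ _ _ hab ha).imp_left fun ⟨b', hb, hp⟩ ↦ ⟨b', hb, .single hp⟩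
  | tail _ hbc ih =>
    rcases ih with ⟨b', hb, hpath⟩ | hb
    · exact (hf _ _ _ hbc hb).imp_left fun ⟨c', hc, hp⟩ ↦ ⟨c', hc, hpath.tail hp⟩
    · exact .inr (hS _ _ hbc hb)

/-- Positions of the composite, read as positions of the outer, respectively inner, graph. -/
def outerPos : Pl n k (Sum V V') → Option (Pl m k V')
  | .inr (.inl (.inr v')) => some (.inr (.inl v'))
  | .inr (.inr r) => some (.inr (.inr r))
  | _ => none

def innerPos : Pl n k (Sum V V') → Option (Pl n m V)
  | .inl i => some (.inl i)
  | .inr (.inl (.inl v)) => some (.inr (.inl v))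
  | _ => none

theorem outerPos_inCod_through (z : Sum V' (Fin k)) :
    outerPos (n := n) (m := m) (V := V) (inCod (through z)) = some (inCod z) := by
  cases z <;> rfl

theorem step_compPrnt_of_outerPos {prnt : Sum (Fin n) V → Sum V (Fin m)}
    {prnt' : Sum (Fin m) V' → Sum V' (Fin k)} {x y : Pl n k (Sum V V')} {a : Pl m k V'}
    (hxy : step (compPrnt prnt prnt') x y) (hx : outerPos x = some a) :
    ∃ b, outerPos y = some b ∧ step prnt' a b := by
  obtain ⟨x | v | v', rfl, rfl⟩ := hxy <;> cases hx
  exact ⟨_, outerPos_inCod_through _, .inr v', rfl, rfl⟩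

theorem isSome_outerPos_of_step {prnt : Sum (Fin n) V → Sum V (Fin m)}
    {prnt' : Sum (Fin m) V' → Sum V' (Fin k)} {x y : Pl n k (Sum V V')}
    (hxy : step (compPrnt prnt prnt') x y) (hx : (outerPos (m := m) x).isSome) :
    (outerPos (m := m) y).isSome := by
  obtain ⟨a, ha⟩ := Option.isSome_iff_exists.mp hx
  obtain ⟨b, hb, -⟩ := step_compPrnt_of_outerPos hxy ha
  simp [hb]

theorem compPrnt_map_inl (prnt : Sum (Fin n) V → Sum V (Fin m))
    (prnt' : Sum (Fin m) V' → Sum V' (Fin k)) (a : Sum (Fin n) V) :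
    compPrnt prnt prnt' (a.map id Sum.inl) =
      (prnt a).elim (Sum.inl ∘ Sum.inl) fun j ↦ through (prnt' (.inl j)) := by
  rcases a with i | v <;> simp only [Sum.map_inl, Sum.map_inr, id, compPrnt] <;>
    rcases prnt _ <;> rfl

theorem step_compPrnt_of_innerPos {prnt : Sum (Fin n) V → Sum V (Fin m)}
    {prnt' : Sum (Fin m) V' → Sum V' (Fin k)} {x y : Pl n k (Sum V V')} {a : Pl n m V}
    (hxy : step (compPrnt prnt prnt') x y) (hx : innerPos x = some a) :
    (∃ b, innerPos y = some b ∧ step prnt a b) ∨ (outerPos (m := m) y).isSome := by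
  obtain ⟨c, rfl, rfl⟩ := hxy
  obtain ⟨a, rfl, rfl⟩ : ∃ a₀ : Sum (Fin n) V, a₀.map id Sum.inl = c ∧ inDom a₀ = a := by
    rcases c with i | v | v' <;> cases hx
    exacts [⟨.inl i, rfl, rfl⟩, ⟨.inr v, rfl, rfl⟩]
  rw [compPrnt_map_inl]
  rcases hp : prnt a with u | j
  · exact .inl ⟨_, rfl, a, rfl, by rw [hp]; rfl⟩
  · simp [outerPos_inCod_through]

/-- Composition of (the place-graph parts of) binding bigraphs preserves
acyclicity of the parent map. -/
theorem compPrnt_acyclic (prnt : Sum (Fin n) V → Sum V (Fin m))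
    (prnt' : Sum (Fin m) V' → Sum V' (Fin k))
    (h : Acyclic prnt) (h' : Acyclic prnt') :
    Acyclic (compPrnt prnt prnt') := by
  rintro (v | v') hcycle
  · rcases hcycle.exists_map_or_mem (f := innerPos) (S := {y | (outerPos (m := m) y).isSome})
      (fun _ _ ↦ isSome_outerPos_of_step) (fun _ _ _ ↦ step_compPrnt_of_innerPos) rfl with ⟨_, ⟨⟩, hpath⟩ | hout
    · exact h v hpath
    · cases hout
  · rcases hcycle.exists_map_or_mem (S := ∅) (by simp)
      (fun _ _ _ hxy hx ↦ .inl (step_compPrnt_of_outerPos hxy hx)) rfl with ⟨_, ⟨⟩, hpath⟩ | hmem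
    exacts [h' v' hpath, hmem]

end Bigraphs
end

section
/- The binding rule is preserved by composition of binding bigraphs: if G : U₁ → U₂ and G' : U₂ → U₃ both satisfy the binding rule (no binding port is linked to an outer name), then their composite G' ∘ G also satisfies the binding rule. -/
namespace Bigraphs

/-- A link graph `X → Y`: binding ports `PB`, free ports `PF`, edges `E`, and a
link map sending points (ports and inner names) to edges or outer names. -/
structure LinkGraph (X Y : Type*) where
  PB : Type
  PF : Type
  E : Type
  link : Sum (Sum PB PF) X → Sum E Y

variable {X Y Z : Type*}

/-- Include an answer of the second link graph into the composite. -/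
def pushSnd (G : LinkGraph X Y) (H : LinkGraph Y Z) :
    Sum H.E Z → Sum (Sum G.E H.E) Z
  | .inl e => .inl (.inr e)
  | .inr z => .inr z

/-- Chase an answer of the first link graph through the second. -/
def chase (G : LinkGraph X Y) (H : LinkGraph Y Z) :
    Sum G.E Y → Sum (Sum G.E H.E) Z
  | .inl e => .inl (.inl e)
  | .inr y => pushSnd G H (H.link (.inr y))

/-- Composition of link graphs: coproduct of ports and edges; a point is sent
to its `link`-image if that is an edge, and otherwise continues through the
middle names with the second link map. -/
def compLink (G : LinkGraph X Y) (H : LinkGraph Y Z) : LinkGraph X Z where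
  PB := Sum G.PB H.PB
  PF := Sum G.PF H.PF
  E := Sum G.E H.E
  link := fun p =>
    match p with
    | .inl (.inl (.inl p)) => chase G H (G.link (.inl (.inl p)))
    | .inl (.inl (.inr p)) => pushSnd G H (H.link (.inl (.inl p)))
    | .inl (.inr (.inl p)) => chase G H (G.link (.inl (.inr p)))
    | .inl (.inr (.inr p)) => pushSnd G H (H.link (.inl (.inr p)))
    | .inr x => chase G H (G.link (.inr x))

/-- The binding rule: every binding port is linked to an edge. -/
def BindingRule (G : LinkGraph X Y) : Prop :=
  ∀ p : G.PB, ∃ e : G.E, G.link (.inl (.inl p)) = .inl e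

theorem compLink_link_bindingPort_fst {G : LinkGraph X Y} (H : LinkGraph Y Z) {p : G.PB}
    {e : G.E} (h : G.link (.inl (.inl p)) = .inl e) :
    (compLink G H).link (.inl (.inl (.inl p))) = .inl (.inl e) := by
  simp only [compLink, h, chase]

theorem compLink_link_bindingPort_snd (G : LinkGraph X Y) {H : LinkGraph Y Z} {p : H.PB}
    {e : H.E} (h : H.link (.inl (.inl p)) = .inl e) :
    (compLink G H).link (.inl (.inl (.inr p))) = .inl (.inr e) := by
  simp only [compLink, h, pushSnd]

/-- The binding rule is preserved by composition of (the link-graph parts of)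
binding bigraphs. -/
theorem bindingRule_comp (G : LinkGraph X Y) (H : LinkGraph Y Z)
    (hG : BindingRule G) (hH : BindingRule H) :
    BindingRule (compLink G H) := by
  rintro (p | p)
  · obtain ⟨e, he⟩ := hG p
    exact ⟨.inl e, compLink_link_bindingPort_fst H he⟩
  · obtain ⟨e, he⟩ := hH p
    exact ⟨.inr e, compLink_link_bindingPort_snd G he⟩

end Bigraphs
end
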